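/- Fix d ≥ 2 and real parameters a, b, and let Λ_{a,b} be the generalized Werner-Holevo map on M_d(ℂ), Λ_{a,b}(ρ) = a ρ + b ρᵀ + (1−a−b)(tr ρ) 1/d. Then the map ρ ↦ Λ_{a,b}(ρᵀ) is completely positive (i.e. Λ_{a,b} is PPT-inducing, equivalently the Choi matrix ∑_{i,j} E_{ij} ⊗ Λ_{a,b}(E_{ji}) is positive semidefinite) if and only if b(d²−1) + a(d−1) + 1 ≥ 0, a(d−1) − b + 1 ≥ 0, and a(d+1) + b − 1 ≤ 0. -/

import Mathlib

open scoped Kronecker ComplexOrder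
open Matrix

noncomputable section

/-- Apply the completely positive map determined by the Kraus operators `v`:
`ρ ↦ ∑ α, v α * ρ * (v α)ᴴ`. -/
def krausApply {K d : Type*} [Fintype K] [Fintype d] (v : K → Matrix d d ℂ)
    (ρ : Matrix d d ℂ) : Matrix d d ℂ :=
  ∑ α, v α * ρ * (v α)ᴴ

/-- The Kraus operators determine a (trace-preserving) quantum channel:
`∑ α, (v α)* (v α) = 1`. -/
def IsKraus {K d : Type*} [Fintype K] [Fintype d] [DecidableEq d]
    (v : K → Matrix d d ℂ) : Prop :=
  ∑ α, (v α)ᴴ * v α = 1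

/-- A density matrix: positive semidefinite with trace one. -/
def IsDensity {d : Type*} [Fintype d] (ρ : Matrix d d ℂ) : Prop :=
  ρ.PosSemidef ∧ ρ.trace = 1

/-- The purity `tr ρ²` of a matrix, as a real number. -/
def purity {d : Type*} [Fintype d] (ρ : Matrix d d ℂ) : ℝ :=
  ((ρ * ρ).trace).re

/-- The Choi matrix of the map `ρ ↦ Λ(ρᵀ)`, namely `∑ i j, E_ij ⊗ Λ(E_ji)`. -/
def choiT {K d : Type*} [Fintype K] [Fintype d] [DecidableEq d]
    (v : K → Matrix d d ℂ) : Matrix (d × d) (d × d) ℂ :=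
  ∑ i, ∑ j, Matrix.single i j (1 : ℂ) ⊗ₖ krausApply v (Matrix.single j i (1 : ℂ))

/-- The flip operator `F` on `ℂ^d ⊗ ℂ^d`, with entries `F_{(i,j),(k,l)} = δ_{il} δ_{jk}`. -/
def flipOp (d : Type*) [DecidableEq d] : Matrix (d × d) (d × d) ℂ :=
  Matrix.of fun p q => if p.1 = q.2 ∧ p.2 = q.1 then 1 else 0


/-- The generalized Werner-Holevo map `Λ_{a,b}(ρ) = a ρ + b ρᵀ + (1−a−b)(tr ρ) 1/d`. -/
def WHmap (d : ℕ) (a b : ℝ) (ρ : Matrix (Fin d) (Fin d) ℂ) : Matrix (Fin d) (Fin d) ℂ :=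
  (a : ℂ) • ρ + (b : ℂ) • ρᵀ
    + ((((1 - a - b : ℝ) : ℂ) * ρ.trace) / (d : ℂ)) • (1 : Matrix (Fin d) (Fin d) ℂ)

/-- The Choi matrix `∑ i j, E_ij ⊗ Λ_{a,b}(E_ij)` of the generalized Werner-Holevo map. -/
def WHchoi (d : ℕ) (a b : ℝ) : Matrix (Fin d × Fin d) (Fin d × Fin d) ℂ :=
  ∑ i, ∑ j, Matrix.single i j (1 : ℂ) ⊗ₖ WHmap d a b (Matrix.single i j (1 : ℂ))

/-- The Choi matrix `∑ i j, E_ij ⊗ Λ_{a,b}(E_ji)` of the map `ρ ↦ Λ_{a,b}(ρᵀ)`. -/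
def WHchoiT (d : ℕ) (a b : ℝ) : Matrix (Fin d × Fin d) (Fin d × Fin d) ℂ :=
  ∑ i, ∑ j, Matrix.single i j (1 : ℂ) ⊗ₖ WHmap d a b (Matrix.single j i (1 : ℂ))


variable {d : ℕ}

def projE (d : Type*) [DecidableEq d] : Matrix (d × d) (d × d) ℂ :=
  Matrix.of fun p q => if p.1 = p.2 ∧ q.1 = q.2 then 1 else 0

-- algebra lemmas
variable {d : ℕ}

lemma flip_mul_flip : flipOp (Fin d) * flipOp (Fin d) = 1 := by
  ext ⟨i, k⟩ ⟨j, l⟩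
  simp [Matrix.mul_apply, flipOp, Fintype.sum_prod_type, ite_and, Finset.sum_ite_eq,
    Finset.sum_ite_eq', Matrix.one_apply, Prod.ext_iff, eq_comm]

lemma flip_mul_proj : flipOp (Fin d) * projE (Fin d) = projE (Fin d) := by
  ext ⟨i, k⟩ ⟨j, l⟩
  simp [Matrix.mul_apply, flipOp, projE, Fintype.sum_prod_type, ite_and, Finset.sum_ite_eq,
    Finset.sum_ite_eq', eq_comm]
  split_ifs <;> rfl

lemma proj_mul_flip : projE (Fin d) * flipOp (Fin d) = projE (Fin d) := by
  ext ⟨i, k⟩ ⟨j, l⟩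
  simp [Matrix.mul_apply, flipOp, projE, Fintype.sum_prod_type, ite_and, Finset.sum_ite_eq,
    Finset.sum_ite_eq', eq_comm, and_comm]

lemma proj_mul_proj : projE (Fin d) * projE (Fin d) = (d : ℂ) • projE (Fin d) := by
  ext ⟨i, k⟩ ⟨j, l⟩
  simp [Matrix.mul_apply, flipOp, projE, Fintype.sum_prod_type, ite_and, Finset.sum_ite_eq,
    Finset.sum_ite_eq', eq_comm, Finset.sum_comm]
  split_ifs <;> rfl

lemma flip_herm : (flipOp (Fin d))ᴴ = flipOp (Fin d) := by
  ext ⟨i, k⟩ ⟨j, l⟩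
  simp [flipOp, Matrix.conjTranspose_apply, and_comm, eq_comm]

lemma proj_herm : (projE (Fin d))ᴴ = projE (Fin d) := by
  ext ⟨i, k⟩ ⟨j, l⟩
  simp [projE, Matrix.conjTranspose_apply, and_comm]

-- Hermitian idempotent is PSD
lemma psd_of_proj {n : Type*} [Fintype n] [DecidableEq n] {M : Matrix n n ℂ}
    (hH : Mᴴ = M) (hI : M * M = M) : M.PosSemidef := by
  have : M = Mᴴ * M := by rw [hH, hI]
  rw [this]; exact posSemidef_conjTranspose_mul_self M

lemma psd_add {n : Type*} [Fintype n] {M N : Matrix n n ℂ}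
    (hM : M.PosSemidef) (hN : N.PosSemidef) : (M + N).PosSemidef := by
  refine .of_dotProduct_mulVec_nonneg (hM.1.add hN.1) fun x => ?_
  rw [Matrix.add_mulVec, dotProduct_add]
  exact add_nonneg (hM.dotProduct_mulVec_nonneg x) (hN.dotProduct_mulVec_nonneg x)

lemma psd_smul {n : Type*} [Fintype n] {M : Matrix n n ℂ} (hM : M.PosSemidef)
    {r : ℝ} (hr : 0 ≤ r) : ((r : ℂ) • M).PosSemidef := by
  refine .of_dotProduct_mulVec_nonneg ?_ ?_
  · unfold Matrix.IsHermitian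
    rw [Matrix.conjTranspose_smul, hM.1, Complex.star_def, Complex.conj_ofReal]
  · intro x
    rw [Matrix.smul_mulVec, dotProduct_smul, smul_eq_mul]
    exact mul_nonneg (Complex.zero_le_real.2 hr) (hM.dotProduct_mulVec_nonneg x)

-- the three spectral projectors
def POm (d : ℕ) : Matrix (Fin d × Fin d) (Fin d × Fin d) ℂ := ((d : ℂ))⁻¹ • projE (Fin d)
def Qsym (d : ℕ) : Matrix (Fin d × Fin d) (Fin d × Fin d) ℂ :=
  (2⁻¹ : ℂ) • (1 + flipOp (Fin d)) - POm d
def Ranti (d : ℕ) : Matrix (Fin d × Fin d) (Fin d × Fin d) ℂ :=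
  (2⁻¹ : ℂ) • (1 - flipOp (Fin d))

lemma POm_herm : (POm d)ᴴ = POm d := by
  rw [POm, Matrix.conjTranspose_smul, proj_herm]
  congr 1
  simp [Complex.star_def, Complex.conj_inv, Complex.conj_natCast]

lemma POm_mul_POm (hd : d ≠ 0) : POm d * POm d = POm d := by
  have hdC : (d : ℂ) ≠ 0 := Nat.cast_ne_zero.mpr hd
  rw [POm, Matrix.smul_mul, Matrix.mul_smul, proj_mul_proj, smul_smul, smul_smul]
  congr 1
  field_simp

lemma POm_psd (hd : d ≠ 0) : (POm d).PosSemidef :=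
  psd_of_proj POm_herm (POm_mul_POm hd)

lemma A_mul_POm (hd : d ≠ 0) : (2⁻¹ : ℂ) • (1 + flipOp (Fin d)) * POm d = POm d := by
  rw [POm, Matrix.smul_mul, Matrix.mul_smul, Matrix.add_mul, Matrix.one_mul, flip_mul_proj,
    smul_smul]
  rw [show (projE (Fin d) + projE (Fin d) : Matrix _ _ ℂ) = (2:ℂ) • projE (Fin d) by module,
    smul_smul]
  congr 1; ring

lemma POm_mul_A (hd : d ≠ 0) : POm d * ((2⁻¹ : ℂ) • (1 + flipOp (Fin d))) = POm d := by
  rw [POm, Matrix.smul_mul, Matrix.mul_smul, Matrix.mul_add, Matrix.mul_one, proj_mul_flip,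
    smul_smul]
  rw [show (projE (Fin d) + projE (Fin d) : Matrix _ _ ℂ) = (2:ℂ) • projE (Fin d) by module,
    smul_smul]
  congr 1; ring

lemma A_mul_A : ((2⁻¹ : ℂ) • (1 + flipOp (Fin d))) * ((2⁻¹ : ℂ) • (1 + flipOp (Fin d)))
    = (2⁻¹ : ℂ) • (1 + flipOp (Fin d)) := by
  simp only [Matrix.smul_mul, Matrix.mul_smul, Matrix.add_mul, Matrix.mul_add,
    Matrix.one_mul, Matrix.mul_one, flip_mul_flip, smul_smul]
  module

lemma Qsym_psd (hd : d ≠ 0) : (Qsym d).PosSemidef := by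
  refine psd_of_proj ?_ ?_
  · rw [Qsym, Matrix.conjTranspose_sub, POm_herm, Matrix.conjTranspose_smul,
      Matrix.conjTranspose_add, flip_herm, Matrix.conjTranspose_one]
    congr 2
    simp [Complex.star_def]
  · rw [Qsym, Matrix.sub_mul, Matrix.mul_sub, Matrix.mul_sub, A_mul_A, A_mul_POm hd,
      POm_mul_A hd, POm_mul_POm hd]
    abel

lemma Ranti_psd : (Ranti d).PosSemidef := by
  refine psd_of_proj ?_ ?_
  · rw [Ranti, Matrix.conjTranspose_smul, Matrix.conjTranspose_sub, flip_herm,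
      Matrix.conjTranspose_one]
    congr 1
    simp [Complex.star_def]
  · rw [Ranti]
    simp only [Matrix.smul_mul, Matrix.mul_smul, Matrix.sub_mul, Matrix.mul_sub,
      Matrix.one_mul, Matrix.mul_one, flip_mul_flip, smul_smul]
    module

lemma trace_std (d : ℕ) (j i : Fin d) :
    (Matrix.single j i (1 : ℂ)).trace = if j = i then 1 else 0 := by
  rcases eq_or_ne j i with h | h
  · subst h; simp [Matrix.trace_single_eq_same]
  · simp [Matrix.trace_single_eq_of_ne (h := h), h]

set_option maxRecDepth 10000 in
lemma WHchoiT_eq (d : ℕ) (a b : ℝ) :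
    WHchoiT d a b = (a : ℂ) • flipOp (Fin d) + (b : ℂ) • projE (Fin d)
      + (((1 - a - b : ℝ) : ℂ) / d) • (1 : Matrix (Fin d × Fin d) (Fin d × Fin d) ℂ) := by
  ext ⟨i, k⟩ ⟨j, l⟩
  simp only [WHchoiT, Matrix.sum_apply, kroneckerMap_apply, WHmap, Matrix.add_apply,
    Matrix.smul_apply, Matrix.transpose_apply, trace_std, smul_eq_mul]
  simp only [Matrix.single, Matrix.of_apply, flipOp, projE, Matrix.one_apply, Prod.ext_iff]
  simp [ite_and, Finset.sum_ite_eq, Finset.sum_ite_eq', mul_ite]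
  split_ifs <;> subst_vars <;> first | ring1 | (exfalso; simp_all)

lemma WH_decomp (hd : d ≠ 0) (a b : ℝ) :
    WHchoiT d a b
      = (((b * (d : ℝ) ^ 2 - b + a * (d : ℝ) - a + 1) / d : ℝ) : ℂ) • POm d
        + (((a * (d : ℝ) - a - b + 1) / d : ℝ) : ℂ) • Qsym d
        + (((1 - b - a * (d : ℝ) - a) / d : ℝ) : ℂ) • Ranti d := by
  have hdC : (d : ℂ) ≠ 0 := Nat.cast_ne_zero.mpr hd
  rw [WHchoiT_eq]
  unfold POm Qsym Ranti
  ext ⟨i, k⟩ ⟨j, l⟩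
  simp only [POm, Matrix.add_apply, Matrix.sub_apply, Matrix.smul_apply, Matrix.one_apply,
    flipOp, projE, Matrix.of_apply, Prod.ext_iff, smul_eq_mul]
  push_cast
  split_ifs <;> field_simp <;> ring

def eInd (p : Fin d × Fin d) : (Fin d × Fin d) → ℂ := fun r => if r = p then 1 else 0

lemma quad_single (M : Matrix (Fin d × Fin d) (Fin d × Fin d) ℂ) (p q : Fin d × Fin d) :
    star (eInd p) ⬝ᵥ (M *ᵥ eInd q) = M p q := by
  simp [eInd, dotProduct, Matrix.mulVec, Finset.sum_ite_eq, Finset.sum_ite_eq',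
    apply_ite, mul_ite, ite_mul]

lemma WHchoiT_apply (a b : ℝ) (i k j l : Fin d) :
    WHchoiT d a b (i, k) (j, l)
      = (if i = l ∧ k = j then (a : ℂ) else 0) + (if i = k ∧ j = l then (b : ℂ) else 0)
        + (if i = j ∧ k = l then (((1 - a - b : ℝ) : ℂ)) / d else 0) := by
  rw [WHchoiT_eq]
  simp [flipOp, projE, Matrix.one_apply, Prod.ext_iff, mul_ite]

def diagVec (d : ℕ) : (Fin d × Fin d) → ℂ := fun p => if p.1 = p.2 then 1 else 0

lemma flip_mulVec_diag : flipOp (Fin d) *ᵥ diagVec d = diagVec d := by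
  ext ⟨i, k⟩
  simp [flipOp, diagVec, Matrix.mulVec, dotProduct, Fintype.sum_prod_type, ite_and,
    Finset.sum_ite_eq, Finset.sum_ite_eq', eq_comm]

lemma proj_mulVec_diag : projE (Fin d) *ᵥ diagVec d = (d : ℂ) • diagVec d := by
  ext ⟨i, k⟩
  simp [projE, diagVec, Matrix.mulVec, dotProduct, Fintype.sum_prod_type, ite_and,
    Finset.sum_ite_eq, Finset.sum_ite_eq', eq_comm]

lemma diag_dot_diag : star (diagVec d) ⬝ᵥ diagVec d = (d : ℂ) := by
  simp [diagVec, dotProduct, Fintype.sum_prod_type, apply_ite, Finset.sum_ite_eq,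
    Finset.sum_ite_eq']


/-- For `d ≥ 2`, the generalized Werner-Holevo map `Λ_{a,b}` is
PPT-inducing (the Choi matrix of `ρ ↦ Λ_{a,b}(ρᵀ)` is positive semidefinite) iff
`b(d²−1) + a(d−1) + 1 ≥ 0`, `a(d−1) − b + 1 ≥ 0` and `a(d+1) + b − 1 ≤ 0`. -/
theorem WH_PPT_inducing_iff {d : ℕ} (hd : 2 ≤ d) (a b : ℝ) :
    (WHchoiT d a b).PosSemidef ↔
      (0 ≤ b * ((d : ℝ) ^ 2 - 1) + a * ((d : ℝ) - 1) + 1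
        ∧ 0 ≤ a * ((d : ℝ) - 1) - b + 1
        ∧ a * ((d : ℝ) + 1) + b - 1 ≤ 0) := by
  have hd0 : d ≠ 0 := by omega
  have hdR : (2 : ℝ) ≤ (d : ℝ) := by exact_mod_cast hd
  have hdpos : (0 : ℝ) < d := by linarith
  have hdne : ((d : ℝ)) ≠ 0 := ne_of_gt hdpos
  have hdC : ((d : ℂ)) ≠ 0 := Nat.cast_ne_zero.mpr hd0
  constructor
  · intro hC
    have hlt : (1 : ℕ) < d := hd
    set i0 : Fin d := ⟨0, by omega⟩
    set i1 : Fin d := ⟨1, by omega⟩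
    have hne : i0 ≠ i1 := by simp [i0, i1, Fin.ext_iff]
    -- first inequality, from the diagonal vector
    have q1 := hC.dotProduct_mulVec_nonneg (diagVec d)
    rw [WHchoiT_eq] at q1
    simp only [Matrix.add_mulVec, Matrix.smul_mulVec, flip_mulVec_diag,
      proj_mulVec_diag, Matrix.one_mulVec, dotProduct_add, dotProduct_smul,
      diag_dot_diag, smul_eq_mul] at q1
    have q1' : (0 : ℂ) ≤ ((a * (d : ℝ) + b * (d : ℝ) ^ 2 + (1 - a - b) : ℝ) : ℂ) := by
      convert q1 using 1
      rw [div_mul_cancel₀ _ hdC]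
      push_cast
      ring
    have q1R : (0 : ℝ) ≤ a * (d : ℝ) + b * (d : ℝ) ^ 2 + (1 - a - b) :=
      Complex.zero_le_real.mp q1'
    -- second inequality, from the symmetric vector
    have q2 := hC.dotProduct_mulVec_nonneg (eInd (i0, i1) + eInd (i1, i0))
    simp only [star_add, Matrix.mulVec_add, add_dotProduct, dotProduct_add,
      quad_single] at q2
    rw [show ((i0, i1) : Fin d × Fin d) = ((i0, i1).1, (i0, i1).2) from rfl] at q2
    simp only [WHchoiT_apply, hne, hne.symm, and_true, true_and, and_false, false_and,
      if_true, if_false, Prod.mk.injEq] at q2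
    have q2' : (0 : ℂ) ≤ ((2 * a + 2 * ((1 - a - b) / d) : ℝ) : ℂ) := by
      convert q2 using 1
      simp [hne, hne.symm]
      push_cast
      ring
    have q2R := Complex.zero_le_real.mp q2'
    -- third inequality, from the antisymmetric vector
    have q3 := hC.dotProduct_mulVec_nonneg (eInd (i0, i1) - eInd (i1, i0))
    simp only [star_sub, Matrix.mulVec_sub, sub_dotProduct, dotProduct_sub,
      quad_single] at q3
    have q3' : (0 : ℂ) ≤ ((2 * ((1 - a - b) / d) - 2 * a : ℝ) : ℂ) := by
      convert q3 using 1
      simp [WHchoiT_apply, hne, hne.symm]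
      push_cast
      ring
    have q3R := Complex.zero_le_real.mp q3'
    refine ⟨by nlinarith, ?_, ?_⟩
    · have e2 : (2 * a + 2 * ((1 - a - b) / d)) * (d : ℝ)
          = 2 * (a * ((d : ℝ) - 1) - b + 1) := by field_simp; ring
      nlinarith [mul_nonneg q2R hdpos.le]
    · have e3 : (2 * ((1 - a - b) / d) - 2 * a) * (d : ℝ)
          = 2 * (1 - b - a * ((d : ℝ) + 1)) := by field_simp; ring
      nlinarith [mul_nonneg q3R hdpos.le]
  · rintro ⟨h1, h2, h3⟩
    rw [WH_decomp hd0 a b]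
    refine psd_add (psd_add (psd_smul (POm_psd hd0) ?_) (psd_smul (Qsym_psd hd0) ?_))
      (psd_smul Ranti_psd ?_)
    · apply div_nonneg _ hdpos.le; nlinarith
    · apply div_nonneg _ hdpos.le; nlinarith
    · apply div_nonneg _ hdpos.le; nlinarith
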